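/- arXiv:2308.05621 — 6 statements merged into one kernel-verified Lean document; each statement's English description precedes it below -/
import Mathlib

section
/- Let H be a real inner product space, ν ∈ (0,1], L > 0, and let f : H → ℝ be differentiable and (L,ν)-Hölder smooth, i.e. ‖∇f(x) − ∇f(y)‖ ≤ L·‖x − y‖^ν for all x, y. Let x⋆ be a global minimizer of f. Then for every x ∈ H, ‖∇f(x)‖^{1/ν + 1} ≤ (1 + 1/ν)·L^{1/ν}·(f(x) − f(x⋆)). -/
open scoped RealInnerProductSpace

/-!
A `ν`-Hölder gradient gives the descent inequality
`f y ≤ f x + ⟪∇f x, y - x⟫ + L / (ν + 1) * ‖y - x‖ ^ (ν + 1)`: the gap between `f` and its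
linearization along the segment has derivative at most `L * ‖y - x‖ ^ (ν + 1) * s ^ ν`.
A gradient step of length `r = (‖∇f x‖ / L) ^ (1 / ν)`, the minimizer of the right-hand side
along `-∇f x`, lowers `f` by `ν / (ν + 1) * ‖∇f x‖ ^ (1 / ν + 1) / L ^ (1 / ν)`, and `f x⋆` lies
below the value reached.
-/

theorem le_add_fderiv_add_rpow_of_holder {E : Type*} [NormedAddCommGroup E] [NormedSpace ℝ E]
    {f : E → ℝ} {f' : E → E →L[ℝ] ℝ} {ν L : ℝ} (hν : 0 ≤ ν)
    (hf : ∀ x, HasFDerivAt f (f' x) x) (hf' : ∀ x y, ‖f' x - f' y‖ ≤ L * ‖x - y‖ ^ ν)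
    (x y : E) :
    f y ≤ f x + f' x (y - x) + L / (ν + 1) * ‖y - x‖ ^ (ν + 1) := by
  set d := y - x with hd
  set C := L * ‖d‖ ^ (ν + 1)
  let φ : ℝ → ℝ := fun s ↦ f (x + s • d) - s * f' x d - C / (ν + 1) * s ^ (ν + 1)
  have hφ : ∀ s, HasDerivAt φ (f' (x + s • d) d - f' x d - C * s ^ ν) s := by
    intro s
    have hline : HasDerivAt (fun s : ℝ ↦ x + s • d) d s := by
      simpa using ((hasDerivAt_id s).smul_const d).const_add x
    have hpow := Real.hasDerivAt_rpow_const (x := s) (p := ν + 1) (Or.inr (by linarith))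
    rw [add_sub_cancel_right] at hpow
    refine ((((hf _).comp_hasDerivAt s hline).sub ((hasDerivAt_id s).mul_const (f' x d))).sub
      (hpow.const_mul (C / (ν + 1)))).congr_deriv ?_
    field_simp
  have hφ' : ∀ s ∈ Set.Ioo (0 : ℝ) 1, f' (x + s • d) d - f' x d - C * s ^ ν ≤ 0 := by
    intro s ⟨hs, _⟩
    rw [sub_nonpos]
    calc f' (x + s • d) d - f' x d = (f' (x + s • d) - f' x) d := rfl
      _ ≤ ‖f' (x + s • d) - f' x‖ * ‖d‖ :=
        (Real.le_norm_self _).trans (ContinuousLinearMap.le_opNorm _ _)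
      _ ≤ L * ‖s • d‖ ^ ν * ‖d‖ := by gcongr; simpa using hf' (x + s • d) x
      _ = C * s ^ ν := by
        simp only [C]
        rw [norm_smul, Real.norm_of_nonneg hs.le, Real.mul_rpow hs.le (norm_nonneg d), mul_comm,
          Real.rpow_add_one' (norm_nonneg d) (by linarith)]
        ring
  have hanti : AntitoneOn φ (Set.Icc 0 1) := by
    refine antitoneOn_of_hasDerivWithinAt_nonpos (convex_Icc 0 1)
      (fun s _ ↦ (hφ s).continuousAt.continuousWithinAt) (fun s _ ↦ (hφ s).hasDerivWithinAt) ?_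
    simpa only [interior_Icc] using hφ'
  have hφ01 := hanti (by simp) (by simp) zero_le_one
  simp only [φ, zero_smul, add_zero, one_smul, Real.zero_rpow (by linarith : ν + 1 ≠ 0),
    Real.one_rpow, hd, add_sub_cancel] at hφ01
  linarith [show C / (ν + 1) = L / (ν + 1) * ‖d‖ ^ (ν + 1) by ring]

theorem le_sub_mul_norm_sq_add_rpow_of_holder {H : Type*} [NormedAddCommGroup H]
    [InnerProductSpace ℝ H] {f : H → ℝ} {f' : H → H} {ν L : ℝ} (hν : 0 ≤ ν)
    (hf : ∀ x, HasFDerivAt f (innerSL ℝ (f' x)) x) (hf' : ∀ x y, ‖f' x - f' y‖ ≤ L * ‖x - y‖ ^ ν)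
    (x : H) {t : ℝ} (ht : 0 ≤ t) :
    f (x - t • f' x) ≤ f x - t * ‖f' x‖ ^ 2 + L / (ν + 1) * (t * ‖f' x‖) ^ (ν + 1) := by
  have hdescent := le_add_fderiv_add_rpow_of_holder hν hf
    (fun y z ↦ by simpa only [← map_sub, innerSL_apply_norm] using hf' y z) x (x - t • f' x)
  rwa [sub_sub_cancel_left, innerSL_apply_apply, inner_neg_right, real_inner_smul_right,
    real_inner_self_eq_norm_sq, norm_neg, norm_smul, Real.norm_of_nonneg ht,
    ← sub_eq_add_neg] at hdescent

theorem rpow_one_div_add_one_eq_of_optimal_step {a L ν : ℝ} (ha : 0 ≤ a) (hL : 0 < L)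
    (hν : 0 < ν) :
    a ^ (1 / ν + 1) = (1 + 1 / ν) * L ^ (1 / ν) *
      ((a / L) ^ (1 / ν) * a - L / (ν + 1) * ((a / L) ^ (1 / ν)) ^ (ν + 1)) := by
  set r := (a / L) ^ (1 / ν) with hr
  have hLr : L * r ^ ν = a := by
    rw [hr, one_div, Real.rpow_inv_rpow (by positivity) hν.ne']
    field_simp
  have hra : a ^ (1 / ν + 1) = L ^ (1 / ν) * r * a := by
    rw [hr, Real.rpow_add_one' ha (by positivity), Real.div_rpow ha hL.le]
    field_simp
  have hmodel : L / (ν + 1) * r ^ (ν + 1) = r * a / (ν + 1) := by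
    rw [Real.rpow_add_one' (by positivity) (by positivity), ← hLr]
    ring
  rw [hra, hmodel]
  field_simp
  ring

theorem holder_smooth_gradient_bound_general
    {H : Type*} [NormedAddCommGroup H] [InnerProductSpace ℝ H]
    (ν L : ℝ) (hν0 : 0 < ν) (hL : 0 < L)
    (f : H → ℝ) (f' : H → H)
    (hdiff : ∀ x, HasFDerivAt f (innerSL ℝ (f' x)) x)
    (hholder : ∀ x y, ‖f' x - f' y‖ ≤ L * ‖x - y‖ ^ ν)
    (xstar : H) (hmin : ∀ x, f xstar ≤ f x) :
    ∀ x : H, ‖f' x‖ ^ (1 / ν + 1) ≤ (1 + 1 / ν) * L ^ (1 / ν) * (f x - f xstar) := by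
  intro x
  rcases eq_or_ne (f' x) 0 with hzero | hne
  · rw [hzero, norm_zero, Real.zero_rpow (by positivity)]
    have := sub_nonneg.2 (hmin x)
    positivity
  have hg : 0 < ‖f' x‖ := norm_pos_iff.2 hne
  set r := (‖f' x‖ / L) ^ (1 / ν)
  have hstep := le_sub_mul_norm_sq_add_rpow_of_holder hν0.le hdiff hholder x
    (t := r / ‖f' x‖) (by positivity)
  rw [div_mul_cancel₀ _ hg.ne', div_mul_eq_mul_div, sq, ← mul_assoc,
    mul_div_cancel_right₀ _ hg.ne'] at hstep
  calc ‖f' x‖ ^ (1 / ν + 1)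
      = (1 + 1 / ν) * L ^ (1 / ν) * (r * ‖f' x‖ - L / (ν + 1) * r ^ (ν + 1)) :=
        rpow_one_div_add_one_eq_of_optimal_step hg.le hL hν0
    _ ≤ (1 + 1 / ν) * L ^ (1 / ν) * (f x - f xstar) := by
        refine mul_le_mul_of_nonneg_left ?_ (by positivity)
        linarith [hmin (x - (r / ‖f' x‖) • f' x)]

/-- For `(L, ν)`-Hölder smooth `f` with global minimizer `x⋆`:
`‖∇f(x)‖^{1/ν + 1} ≤ (1 + 1/ν)·L^{1/ν}·(f(x) − f(x⋆))`. -/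
theorem holder_smooth_gradient_bound
    {H : Type*} [NormedAddCommGroup H] [InnerProductSpace ℝ H]
    (ν L : ℝ) (hν0 : 0 < ν) (hν1 : ν ≤ 1) (hL : 0 < L)
    (f : H → ℝ) (f' : H → H)
    (hdiff : ∀ x, HasFDerivAt f (innerSL ℝ (f' x)) x)
    (hholder : ∀ x y, ‖f' x - f' y‖ ≤ L * ‖x - y‖ ^ ν)
    (xstar : H) (hmin : ∀ x, f xstar ≤ f x) :
    ∀ x : H, ‖f' x‖ ^ (1 / ν + 1) ≤ (1 + 1 / ν) * L ^ (1 / ν) * (f x - f xstar) :=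
  holder_smooth_gradient_bound_general ν L hν0 hL f f' hdiff hholder xstar hmin
end

section
/- Let H be a real inner product space, T a positive integer, x₁ ∈ H, α > 0, and let g_1, …, g_T ∈ H with ‖g_t‖ ≤ G for all t. Define the dual averaging iterates x_{t+1} = x₁ − (α / sqrt(G² + ∑_{i=1}^{t} ‖g_i‖²)) · ∑_{i=1}^{t} g_i for t = 1, …, T. Then for every u ∈ H, ∑_{t=1}^T ⟨g_t, x_t − u⟩ ≤ (‖x₁ − u‖²/(2α) + α) · sqrt(G² + ∑_{t=1}^T ‖g_t‖²). -/
/-!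
With `z t = g 1 + ⋯ + g t` and `η t = α / √(G² + ‖g 1‖² + ⋯ + ‖g t‖²)`, the iterates are
`x t = x₁ - η (t - 1) • z (t - 1)`, so the regret against `u` is
`⟪z T, x₁ - u⟫ - ∑ t, η (t - 1) * ⟪g t, z (t - 1)⟫`. Young's inequality bounds the first term
by `‖x₁ - u‖² / (2 η T) + η T ‖z T‖² / 2`, and as `η` is nonincreasing the potential
`η n ‖z n‖² / 2 - ∑ t ≤ n, η (t - 1) ⟪g t, z (t - 1)⟫` grows by at most `η n ‖g (n + 1)‖² / 2`
per step. Since `‖g t‖ ≤ G`, the denominator of `η (t - 1)` dominates `√(‖g 1‖² + ⋯ + ‖g t‖²)`,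
and `∑ a t / √(a 1 + ⋯ + a t) ≤ 2 √(a 1 + ⋯ + a T)` bounds the accumulated growth by `α √(…)`.
-/

open scoped RealInnerProductSpace

open Finset

theorem mul_le_sq_div_add_mul_sq {η : ℝ} (hη : 0 < η) (a b : ℝ) :
    a * b ≤ b ^ 2 / (2 * η) + η / 2 * a ^ 2 := by
  rw [div_add' _ _ _ (by positivity), le_div_iff₀ (by positivity)]
  nlinarith [sq_nonneg (η * a - b)]

theorem div_le_two_mul_sqrt_add_sub_sqrt {S a d : ℝ} (hS : 0 ≤ S) (ha : 0 ≤ a) (hd : 0 < d)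
    (hsd : √(S + a) ≤ d) : a / d ≤ 2 * (√(S + a) - √S) := by
  set s := √(S + a)
  set r := √S
  have hrs : r ≤ s := Real.sqrt_le_sqrt (by linarith)
  have ha_eq : a = s ^ 2 - r ^ 2 := by
    rw [Real.sq_sqrt (by linarith), Real.sq_sqrt hS]; ring
  rw [div_le_iff₀ hd, ha_eq]
  nlinarith [mul_le_mul_of_nonneg_left hsd (sub_nonneg.2 hrs),
    mul_le_mul_of_nonneg_left hrs (sub_nonneg.2 hrs)]

/-- With `S t = ∑ i ∈ Icc 1 t, a i`, each term is at most `2 (√(S t) - √(S (t - 1)))`. -/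
theorem sum_div_le_two_mul_sqrt_sum (a d : ℕ → ℝ) (ha : ∀ t, 0 ≤ a t) (n : ℕ)
    (hd : ∀ t ∈ Icc 1 n, 0 < d t ∧ √(∑ i ∈ Icc 1 t, a i) ≤ d t) :
    ∑ t ∈ Icc 1 n, a t / d t ≤ 2 * √(∑ i ∈ Icc 1 n, a i) := by
  induction n with
  | zero => simp
  | succ k ih =>
    have ih := ih fun t ht => hd t (Icc_subset_Icc_right k.le_succ ht)
    obtain ⟨hd_pos, hd_ge⟩ := hd (k + 1) (right_mem_Icc.2 (Nat.le_add_left 1 k))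
    rw [sum_Icc_succ_top (Nat.le_add_left 1 k)] at hd_ge ⊢
    rw [sum_Icc_succ_top (Nat.le_add_left 1 k)]
    have hstep := div_le_two_mul_sqrt_add_sub_sqrt
      (sum_nonneg fun i _ => ha i) (ha (k + 1)) hd_pos hd_ge
    linarith

section AdaGradNorm

variable {H : Type*} [NormedAddCommGroup H]

noncomputable def adaGradNorm (G : ℝ) (g : ℕ → H) (n : ℕ) : ℝ :=
  √(G ^ 2 + ∑ i ∈ Icc 1 n, ‖g i‖ ^ 2)

theorem adaGradNorm_pos {G : ℝ} (hG : 0 < G) (g : ℕ → H) (n : ℕ) : 0 < adaGradNorm G g n :=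
  Real.sqrt_pos.2 (by positivity)

theorem adaGradNorm_mono (G : ℝ) (g : ℕ → H) : Monotone (adaGradNorm G g) :=
  monotone_nat_of_le_succ fun n => Real.sqrt_le_sqrt <| by
    rw [sum_Icc_succ_top (Nat.le_add_left 1 n)]
    linarith [sq_nonneg ‖g (n + 1)‖]

theorem antitone_div_adaGradNorm {α G : ℝ} (hα : 0 < α) (hG : 0 < G) (g : ℕ → H) :
    Antitone fun n => α / adaGradNorm G g n := fun _ _ hmn =>
  div_le_div_of_nonneg_left hα.le (adaGradNorm_pos hG g _) (adaGradNorm_mono G g hmn)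

theorem sqrt_sum_sq_norm_le_adaGradNorm_pred {G : ℝ} {g : ℕ → H} {t : ℕ} (ht : 1 ≤ t)
    (hg : ‖g t‖ ≤ G) : √(∑ i ∈ Icc 1 t, ‖g i‖ ^ 2) ≤ adaGradNorm G g (t - 1) := by
  obtain ⟨k, rfl⟩ : ∃ k, t = k + 1 := ⟨t - 1, by omega⟩
  rw [Nat.add_sub_cancel, sum_Icc_succ_top (Nat.le_add_left 1 k)]
  have hg_sq : ‖g (k + 1)‖ ^ 2 ≤ G ^ 2 := pow_le_pow_left₀ (norm_nonneg _) hg 2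
  exact Real.sqrt_le_sqrt (by linarith)

theorem sum_div_adaGradNorm_mul_sq_norm_le {α G : ℝ} (hα : 0 ≤ α) (hG : 0 < G) {g : ℕ → H}
    {T : ℕ} (hg : ∀ t ∈ Icc 1 T, ‖g t‖ ≤ G) :
    ∑ t ∈ Icc 1 T, α / adaGradNorm G g (t - 1) / 2 * ‖g t‖ ^ 2 ≤ α * adaGradNorm G g T := by
  have hterms : ∀ t ∈ Icc 1 T,
      0 < adaGradNorm G g (t - 1) ∧ √(∑ i ∈ Icc 1 t, ‖g i‖ ^ 2) ≤ adaGradNorm G g (t - 1) :=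
    fun t ht => ⟨adaGradNorm_pos hG g _,
      sqrt_sum_sq_norm_le_adaGradNorm_pred (mem_Icc.1 ht).1 (hg t ht)⟩
  calc _ = α / 2 * ∑ t ∈ Icc 1 T, ‖g t‖ ^ 2 / adaGradNorm G g (t - 1) := by
        rw [mul_sum]; exact sum_congr rfl fun t _ => by ring
    _ ≤ α / 2 * (2 * √(∑ i ∈ Icc 1 T, ‖g i‖ ^ 2)) := by
        gcongr; exact sum_div_le_two_mul_sqrt_sum _ _ (fun t => sq_nonneg _) T hterms
    _ ≤ α / 2 * (2 * adaGradNorm G g T) := by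
        gcongr; exact Real.sqrt_le_sqrt (le_add_of_nonneg_left (sq_nonneg G))
    _ = α * adaGradNorm G g T := by ring

end AdaGradNorm

section DualAveraging

variable {H : Type*} [NormedAddCommGroup H] [InnerProductSpace ℝ H]

theorem dualAveraging_potential_le (g : ℕ → H) {η : ℕ → ℝ} (hη : Antitone η) (n : ℕ) :
    η n / 2 * ‖∑ i ∈ Icc 1 n, g i‖ ^ 2
        - ∑ t ∈ Icc 1 n, η (t - 1) * ⟪g t, ∑ i ∈ Icc 1 (t - 1), g i⟫
      ≤ ∑ t ∈ Icc 1 n, η (t - 1) / 2 * ‖g t‖ ^ 2 := by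
  induction n with
  | zero => simp
  | succ k ih =>
    rw [sum_Icc_succ_top (Nat.le_add_left 1 k), sum_Icc_succ_top (Nat.le_add_left 1 k),
      sum_Icc_succ_top (Nat.le_add_left 1 k), Nat.add_sub_cancel]
    set z := ∑ i ∈ Icc 1 k, g i
    have hnorm : ‖z + g (k + 1)‖ ^ 2 = ‖z‖ ^ 2 + 2 * ⟪g (k + 1), z⟫ + ‖g (k + 1)‖ ^ 2 := by
      rw [norm_add_sq_real, real_inner_comm]
    have hdecay : (η (k + 1) - η k) * ‖z + g (k + 1)‖ ^ 2 ≤ 0 :=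
      mul_nonpos_of_nonpos_of_nonneg (sub_nonpos.2 (hη k.le_succ)) (sq_nonneg _)
    have hsplit : η (k + 1) / 2 * ‖z + g (k + 1)‖ ^ 2 - η k * ⟪g (k + 1), z⟫
        = (η (k + 1) - η k) / 2 * ‖z + g (k + 1)‖ ^ 2 + η k / 2 * ‖z‖ ^ 2
          + η k / 2 * ‖g (k + 1)‖ ^ 2 := by
      rw [hnorm]; ring
    linarith

theorem dualAveraging_regret_le (g x : ℕ → H) {η : ℕ → ℝ} (hη : Antitone η) {T : ℕ}
    (hηT : 0 < η T) (x₁ : H)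
    (hx : ∀ t ∈ Icc 1 T, x t = x₁ - η (t - 1) • ∑ i ∈ Icc 1 (t - 1), g i) (u : H) :
    ∑ t ∈ Icc 1 T, ⟪g t, x t - u⟫
      ≤ ‖x₁ - u‖ ^ 2 / (2 * η T) + ∑ t ∈ Icc 1 T, η (t - 1) / 2 * ‖g t‖ ^ 2 := by
  have hsplit : ∑ t ∈ Icc 1 T, ⟪g t, x t - u⟫
      = ⟪∑ t ∈ Icc 1 T, g t, x₁ - u⟫
        - ∑ t ∈ Icc 1 T, η (t - 1) * ⟪g t, ∑ i ∈ Icc 1 (t - 1), g i⟫ := by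
    rw [sum_inner, ← sum_sub_distrib]
    refine sum_congr rfl fun t ht => ?_
    rw [hx t ht, sub_right_comm, inner_sub_right, real_inner_smul_right]
  have hyoung : ⟪∑ t ∈ Icc 1 T, g t, x₁ - u⟫
      ≤ ‖x₁ - u‖ ^ 2 / (2 * η T) + η T / 2 * ‖∑ t ∈ Icc 1 T, g t‖ ^ 2 :=
    (real_inner_le_norm _ _).trans (mul_le_sq_div_add_mul_sq hηT _ _)
  have hpotential := dualAveraging_potential_le g hη T
  linarith

end DualAveraging

theorem adagrad_norm_dual_averaging_regret_general
    {H : Type*} [NormedAddCommGroup H] [InnerProductSpace ℝ H]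
    (T : ℕ) (x₁ : H) (α G : ℝ) (hα : 0 < α)
    (g x : ℕ → H)
    (hG : ∀ t ∈ Finset.Icc 1 T, ‖g t‖ ≤ G)
    (hx1 : x 1 = x₁)
    (hrec : ∀ t ∈ Finset.Icc 1 T,
      x (t + 1) = x₁ - (α / Real.sqrt (G ^ 2 + ∑ i ∈ Finset.Icc 1 t, ‖g i‖ ^ 2)) •
        ∑ i ∈ Finset.Icc 1 t, g i) :
    ∀ u : H, ∑ t ∈ Finset.Icc 1 T, ⟪g t, x t - u⟫
      ≤ (‖x₁ - u‖ ^ 2 / (2 * α) + α) *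
        Real.sqrt (G ^ 2 + ∑ t ∈ Finset.Icc 1 T, ‖g t‖ ^ 2) := by
  intro u
  rcases le_or_gt G 0 with hG_nonpos | hG_pos
  · have hg_zero : ∀ t ∈ Icc 1 T, g t = 0 := fun t ht =>
      norm_le_zero_iff.1 ((hG t ht).trans hG_nonpos)
    rw [sum_eq_zero fun t ht => by rw [hg_zero t ht, inner_zero_left]]
    positivity
  have hx : ∀ t ∈ Icc 1 T,
      x t = x₁ - (α / adaGradNorm G g (t - 1)) • ∑ i ∈ Icc 1 (t - 1), g i := by
    intro t ht
    obtain _ | _ | m := t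
    · simp at ht
    · simp [hx1]
    · simpa [adaGradNorm] using hrec (m + 1)
        (mem_Icc.2 ⟨by omega, by have := (mem_Icc.1 ht).2; omega⟩)
  have hV_pos := adaGradNorm_pos hG_pos g T
  calc ∑ t ∈ Icc 1 T, ⟪g t, x t - u⟫
      ≤ ‖x₁ - u‖ ^ 2 / (2 * (α / adaGradNorm G g T))
          + ∑ t ∈ Icc 1 T, α / adaGradNorm G g (t - 1) / 2 * ‖g t‖ ^ 2 :=
        dualAveraging_regret_le g x (antitone_div_adaGradNorm hα hG_pos g) (by positivity)
          x₁ hx u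
    _ ≤ ‖x₁ - u‖ ^ 2 / (2 * (α / adaGradNorm G g T)) + α * adaGradNorm G g T := by
        gcongr; exact sum_div_adaGradNorm_mul_sq_norm_le hα.le hG_pos hG
    _ = (‖x₁ - u‖ ^ 2 / (2 * α) + α) * adaGradNorm G g T := by field_simp

/-- Regret bound for Dual Averaging with AdaGrad-norm stepsizes:
`∑_{t=1}^T ⟨g_t, x_t − u⟩ ≤ (‖x₁ − u‖²/(2α) + α)·sqrt(G² + ∑_{t=1}^T ‖g_t‖²)`. -/
theorem adagrad_norm_dual_averaging_regret
    {H : Type*} [NormedAddCommGroup H] [InnerProductSpace ℝ H]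
    (T : ℕ) (hT : 0 < T) (x₁ : H) (α G : ℝ) (hα : 0 < α)
    (g x : ℕ → H)
    (hG : ∀ t ∈ Finset.Icc 1 T, ‖g t‖ ≤ G)
    (hx1 : x 1 = x₁)
    (hrec : ∀ t ∈ Finset.Icc 1 T,
      x (t + 1) = x₁ - (α / Real.sqrt (G ^ 2 + ∑ i ∈ Finset.Icc 1 t, ‖g i‖ ^ 2)) •
        ∑ i ∈ Finset.Icc 1 t, g i) :
    ∀ u : H, ∑ t ∈ Finset.Icc 1 T, ⟪g t, x t - u⟫
      ≤ (‖x₁ - u‖ ^ 2 / (2 * α) + α) *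
        Real.sqrt (G ^ 2 + ∑ t ∈ Finset.Icc 1 T, ‖g t‖ ^ 2) :=
  adagrad_norm_dual_averaging_regret_general T x₁ α G hα g x hG hx1 hrec
end

section
/- Let ν ∈ (0,1], L > 0, G > 0, α > 0, T a positive integer. Let f : H → ℝ (H a real inner product space) be convex and differentiable with global minimizer x⋆ satisfying ‖∇f(x)‖^{1/ν+1} ≤ (1+1/ν)·L^{1/ν}·(f(x) − f(x⋆)) for all x. Let x_1, …, x_T ∈ H, set g_t = ∇f(x_t), assume ‖g_t‖ ≤ G for all t, and assume the regret bound ∑_{t=1}^T (f(x_t) − f(x⋆)) ≤ (‖x₁ − x⋆‖²/(2α) + α)·(G + sqrt(∑_{t=1}^T ‖g_t‖²)). Then ∑_{t=1}^T (f(x_t) − f(x⋆)) ≤ max( L·(1/ν + 1)^ν·(‖x₁ − x⋆‖²/α + 2α)^{ν+1}·T^{(1−ν)/2}, G·(‖x₁ − x⋆‖²/α + 2α) ). -/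
/-!
The gradient bound gives `‖g‖² ≤ (C δ)^p` for the gap `δ = f x - f x⋆`, with `p = 2ν/(ν+1) ≤ 1`
and `C = (1 + 1/ν) L^{1/ν}`. By concavity of `t ↦ t^p`, the sum of squared gradient norms is
then at most `T^{1-p} (C S)^p`, where `S` is the total gap. The regret bound reads
`S ≤ D/2 (G + √∑ ‖g_t‖²)` with `D = ‖x₁ - x⋆‖²/α + 2α`, so either `S ≤ G D`, or `S ≤ D √∑ ‖g_t‖²`
and hence `S^{ν+1} ≤ D^{ν+1} T^{(1-ν)/2} C^ν S^ν`, which self-bounds `S`.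
-/

open Finset

lemma sum_rpow_le_card_rpow_mul_rpow_sum {ι : Type*} (s : Finset ι) {a : ι → ℝ}
    (ha : ∀ i ∈ s, 0 ≤ a i) {p : ℝ} (hp0 : 0 < p) (hp1 : p ≤ 1) :
    ∑ i ∈ s, a i ^ p ≤ (#s : ℝ) ^ (1 - p) * (∑ i ∈ s, a i) ^ p := by
  have hp_inv : 1 ≤ 1 / p := by rw [le_div_iff₀ hp0]; linarith
  have hsum_nonneg : 0 ≤ ∑ i ∈ s, a i ^ p := sum_nonneg fun i hi => Real.rpow_nonneg (ha i hi) p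
  -- the convex power mean inequality for the exponent `1/p ≥ 1`, applied to `a i ^ p`
  have key := Real.rpow_sum_le_const_mul_sum_rpow_of_nonneg s (f := fun i => a i ^ p) hp_inv
    fun i hi => Real.rpow_nonneg (ha i hi) p
  have hinv : ∀ i ∈ s, (a i ^ p) ^ (1 / p) = a i := fun i hi => by
    rw [← Real.rpow_mul (ha i hi), mul_one_div_cancel hp0.ne', Real.rpow_one]
  rw [sum_congr rfl hinv] at key
  have := Real.rpow_le_rpow (Real.rpow_nonneg hsum_nonneg _) key hp0.le
  rwa [← Real.rpow_mul hsum_nonneg, one_div_mul_cancel hp0.ne', Real.rpow_one,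
    Real.mul_rpow (Real.rpow_nonneg (Nat.cast_nonneg _) _) (sum_nonneg ha),
    ← Real.rpow_mul (Nat.cast_nonneg _), sub_mul, one_div_mul_cancel hp0.ne', one_mul] at this

lemma sq_le_rpow_of_rpow_le {u b ν : ℝ} (hν : 0 < ν) (hu : 0 ≤ u)
    (h : u ^ (1 / ν + 1) ≤ b) : u ^ 2 ≤ b ^ (2 * ν / (ν + 1)) := by
  have hexp : (1 / ν + 1) * (2 * ν / (ν + 1)) = 2 := by field_simp; ring
  calc u ^ 2 = (u ^ (1 / ν + 1)) ^ (2 * ν / (ν + 1)) := by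
        rw [← Real.rpow_mul hu, hexp, Real.rpow_two]
    _ ≤ b ^ (2 * ν / (ν + 1)) := Real.rpow_le_rpow (Real.rpow_nonneg hu _) h (by positivity)

lemma sqrt_sum_sq_rpow_le {ι : Type*} (s : Finset ι) {u δ : ι → ℝ} {ν C : ℝ}
    (hν0 : 0 < ν) (hν1 : ν ≤ 1) (hu : ∀ i ∈ s, 0 ≤ u i)
    (h : ∀ i ∈ s, u i ^ (1 / ν + 1) ≤ C * δ i) :
    √(∑ i ∈ s, u i ^ 2) ^ (ν + 1) ≤ (#s : ℝ) ^ ((1 - ν) / 2) * (C * ∑ i ∈ s, δ i) ^ ν := by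
  set p := 2 * ν / (ν + 1)
  have hp0 : 0 < p := by positivity
  have hp1 : p ≤ 1 := by rw [div_le_one (by positivity)]; linarith
  have hCδ : ∀ i ∈ s, 0 ≤ C * δ i := fun i hi =>
    (Real.rpow_nonneg (hu i hi) _).trans (h i hi)
  have hsum : ∑ i ∈ s, u i ^ 2 ≤ (#s : ℝ) ^ (1 - p) * (C * ∑ i ∈ s, δ i) ^ p := by
    rw [mul_sum]
    exact (sum_le_sum fun i hi => sq_le_rpow_of_rpow_le hν0 (hu i hi) (h i hi)).trans
      (sum_rpow_le_card_rpow_mul_rpow_sum s hCδ hp0 hp1)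
  have hCS : 0 ≤ C * ∑ i ∈ s, δ i := by rw [mul_sum]; exact sum_nonneg hCδ
  have hcard : (1 - p) * ((ν + 1) / 2) = (1 - ν) / 2 := by simp only [p]; field_simp; ring
  have hpow : p * ((ν + 1) / 2) = ν := by simp only [p]; field_simp
  calc √(∑ i ∈ s, u i ^ 2) ^ (ν + 1) = (∑ i ∈ s, u i ^ 2) ^ ((ν + 1) / 2) := by
        rw [Real.sqrt_eq_rpow, ← Real.rpow_mul (sum_nonneg fun i _ => sq_nonneg _)]
        ring_nf
    _ ≤ ((#s : ℝ) ^ (1 - p) * (C * ∑ i ∈ s, δ i) ^ p) ^ ((ν + 1) / 2) :=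
        Real.rpow_le_rpow (sum_nonneg fun i _ => sq_nonneg _) hsum (by positivity)
    _ = (#s : ℝ) ^ ((1 - ν) / 2) * (C * ∑ i ∈ s, δ i) ^ ν := by
        rw [Real.mul_rpow (Real.rpow_nonneg (Nat.cast_nonneg _) _) (Real.rpow_nonneg hCS _),
          ← Real.rpow_mul (Nat.cast_nonneg _), ← Real.rpow_mul hCS, hcard, hpow]

lemma le_of_rpow_add_one_le_mul_rpow {S M ν : ℝ} (hS : 0 < S) (h : S ^ (ν + 1) ≤ M * S ^ ν) :
    S ≤ M := by
  rw [Real.rpow_add_one hS.ne', mul_comm] at h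
  exact le_of_mul_le_mul_right h (Real.rpow_pos_of_pos hS ν)

theorem adagrad_norm_holder_suboptimality_sum_general
    {H : Type*} [NormedAddCommGroup H] [InnerProductSpace ℝ H]
    (ν L G α : ℝ) (hν0 : 0 < ν) (hν1 : ν ≤ 1) (hL : 0 < L) (hG : 0 < G) (hα : 0 < α)
    (T : ℕ)
    (f : H → ℝ) (f' : H → H)
    (xstar : H)
    (hgradbound : ∀ x : H,
      ‖f' x‖ ^ (1 / ν + 1) ≤ (1 + 1 / ν) * L ^ (1 / ν) * (f x - f xstar))
    (x : ℕ → H)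
    (hregret : ∑ t ∈ Finset.Icc 1 T, (f (x t) - f xstar)
      ≤ (‖x 1 - xstar‖ ^ 2 / (2 * α) + α) *
        (G + Real.sqrt (∑ t ∈ Finset.Icc 1 T, ‖f' (x t)‖ ^ 2))) :
    ∑ t ∈ Finset.Icc 1 T, (f (x t) - f xstar)
      ≤ max (L * (1 / ν + 1) ^ ν * (‖x 1 - xstar‖ ^ 2 / α + 2 * α) ^ (ν + 1) *
              (T : ℝ) ^ ((1 - ν) / 2))
            (G * (‖x 1 - xstar‖ ^ 2 / α + 2 * α)) := by
  set S := ∑ t ∈ Icc 1 T, (f (x t) - f xstar)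
  set D := ‖x 1 - xstar‖ ^ 2 / α + 2 * α
  set C := (1 + 1 / ν) * L ^ (1 / ν)
  have hregret' : S ≤ D / 2 * (G + √(∑ t ∈ Icc 1 T, ‖f' (x t)‖ ^ 2)) := by
    have hD : ‖x 1 - xstar‖ ^ 2 / (2 * α) + α = D / 2 := by simp only [D]; field_simp
    rwa [hD] at hregret
  rcases le_or_gt S (G * D) with hGD | hGD
  · exact le_max_of_le_right hGD
  have hS : 0 < S := (by positivity : 0 < G * D).trans hGD
  have hSD : S ≤ D * √(∑ t ∈ Icc 1 T, ‖f' (x t)‖ ^ 2) := by linarith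
  have hCν : C ^ ν = (1 / ν + 1) ^ ν * L := by
    rw [Real.mul_rpow (by positivity) (by positivity), ← Real.rpow_mul hL.le,
      one_div_mul_cancel hν0.ne', Real.rpow_one, add_comm]
  refine le_max_of_le_left (le_of_rpow_add_one_le_mul_rpow (ν := ν) hS ?_)
  calc S ^ (ν + 1) ≤ (D * √(∑ t ∈ Icc 1 T, ‖f' (x t)‖ ^ 2)) ^ (ν + 1) :=
        Real.rpow_le_rpow hS.le hSD (by positivity)
    _ = D ^ (ν + 1) * √(∑ t ∈ Icc 1 T, ‖f' (x t)‖ ^ 2) ^ (ν + 1) :=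
        Real.mul_rpow (by positivity) (Real.sqrt_nonneg _)
    _ ≤ D ^ (ν + 1) * ((T : ℝ) ^ ((1 - ν) / 2) * (C * S) ^ ν) := by
        have := sqrt_sum_sq_rpow_le (Icc 1 T) hν0 hν1 (fun t _ => norm_nonneg (f' (x t)))
          fun t _ => hgradbound (x t)
        rw [Nat.card_Icc, Nat.add_sub_cancel] at this
        gcongr
    _ = L * (1 / ν + 1) ^ ν * D ^ (ν + 1) * (T : ℝ) ^ ((1 - ν) / 2) * S ^ ν := by
        rw [Real.mul_rpow (by positivity) hS.le, hCν]; ring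

/-- AdaGrad-norm adapts to Hölder smoothness: bound on the sum of suboptimality gaps. -/
theorem adagrad_norm_holder_suboptimality_sum
    {H : Type*} [NormedAddCommGroup H] [InnerProductSpace ℝ H]
    (ν L G α : ℝ) (hν0 : 0 < ν) (hν1 : ν ≤ 1) (hL : 0 < L) (hG : 0 < G) (hα : 0 < α)
    (T : ℕ) (hT : 0 < T)
    (f : H → ℝ) (f' : H → H)
    (hconv : ConvexOn ℝ Set.univ f)
    (hdiff : ∀ x, HasFDerivAt f (innerSL ℝ (f' x)) x)
    (xstar : H) (hmin : ∀ x, f xstar ≤ f x)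
    (hgradbound : ∀ x : H,
      ‖f' x‖ ^ (1 / ν + 1) ≤ (1 + 1 / ν) * L ^ (1 / ν) * (f x - f xstar))
    (x : ℕ → H)
    (hGb : ∀ t ∈ Finset.Icc 1 T, ‖f' (x t)‖ ≤ G)
    (hregret : ∑ t ∈ Finset.Icc 1 T, (f (x t) - f xstar)
      ≤ (‖x 1 - xstar‖ ^ 2 / (2 * α) + α) *
        (G + Real.sqrt (∑ t ∈ Finset.Icc 1 T, ‖f' (x t)‖ ^ 2))) :
    ∑ t ∈ Finset.Icc 1 T, (f (x t) - f xstar)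
      ≤ max (L * (1 / ν + 1) ^ ν * (‖x 1 - xstar‖ ^ 2 / α + 2 * α) ^ (ν + 1) *
              (T : ℝ) ^ ((1 - ν) / 2))
            (G * (‖x 1 - xstar‖ ^ 2 / α + 2 * α)) :=
  adagrad_norm_holder_suboptimality_sum_general ν L G α hν0 hν1 hL hG hα T f f' xstar hgradbound x
    hregret
end

section
/- Let H be a real inner product space, f : H → ℝ convex and differentiable, T a positive integer, and x_1, …, x_T ∈ H with g_t = ∇f(x_t) ≠ 0 for all t. Suppose for some u ∈ H and B ∈ ℝ that ∑_{t=1}^T ⟨g_t/‖g_t‖, x_t − u⟩ ≤ B. Define the weighted average x̄_T = (∑_{t=1}^T 1/‖g_t‖)^{-1} · ∑_{t=1}^T x_t/‖g_t‖. Then f(x̄_T) − f(u) ≤ B / (∑_{t=1}^T 1/‖g_t‖). -/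
/-!
Weighting the tangent-line inequality `f x_t - f u ≤ ⟪g_t, x_t - u⟫` by `1/‖g_t‖` turns the
normalized regret bound into a bound on the weighted mean of `f x_t - f u`, and Jensen's
inequality moves that mean inside `f`.
-/

open scoped RealInnerProductSpace

theorem ConvexOn.add_fderiv_sub_le {E : Type*} [NormedAddCommGroup E] [NormedSpace ℝ E]
    {s : Set E} {f : E → ℝ} {f' : E →L[ℝ] ℝ} {x u : E} (hf : ConvexOn ℝ s f)
    (hx : x ∈ s) (hu : u ∈ s) (hdiff : HasFDerivAt f f' x) :
    f x + f' (u - x) ≤ f u := by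
  set ℓ : ℝ →ᵃ[ℝ] E := AffineMap.lineMap x u
  have hderiv : HasDerivAt (f ∘ ℓ) (f' (u - x)) 0 :=
    (AffineMap.lineMap_apply_zero (k := ℝ) x u ▸ hdiff).comp_hasDerivAt 0
      AffineMap.hasDerivAt_lineMap
  have := (hf.comp_affineMap ℓ).le_slope_of_hasDerivAt (by simpa [ℓ] using hx)
    (by simpa [ℓ] using hu) zero_lt_one hderiv
  simp only [slope_def_field, Function.comp_apply, ℓ, AffineMap.lineMap_apply_zero,
    AffineMap.lineMap_apply_one, sub_zero, div_one] at this
  linarith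

theorem ConvexOn.sub_le_inner_of_hasFDerivAt {H : Type*} [NormedAddCommGroup H]
    [InnerProductSpace ℝ H] {s : Set H} {f : H → ℝ} {g x u : H} (hf : ConvexOn ℝ s f)
    (hx : x ∈ s) (hu : u ∈ s) (hdiff : HasFDerivAt f (innerSL ℝ g) x) :
    f x - f u ≤ ⟪g, x - u⟫ := by
  have := hf.add_fderiv_sub_le hx hu hdiff
  rw [innerSL_apply_apply, ← neg_sub, inner_neg_right] at this
  linarith

theorem ConvexOn.sum_mul_map_centerMass_sub_le {H ι : Type*} [NormedAddCommGroup H]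
    [InnerProductSpace ℝ H] {s : Set H} {f : H → ℝ} (hf : ConvexOn ℝ s f) {t : Finset ι}
    {w : ι → ℝ} {p g : ι → H} (hw₀ : ∀ i ∈ t, 0 ≤ w i) (hw₁ : 0 < ∑ i ∈ t, w i)
    (hp : ∀ i ∈ t, p i ∈ s) (hdiff : ∀ i ∈ t, HasFDerivAt f (innerSL ℝ (g i)) (p i))
    {u : H} (hu : u ∈ s) :
    (∑ i ∈ t, w i) * (f (t.centerMass w p) - f u) ≤ ∑ i ∈ t, w i * ⟪g i, p i - u⟫ :=
  calc (∑ i ∈ t, w i) * (f (t.centerMass w p) - f u)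
      ≤ (∑ i ∈ t, w i) * (t.centerMass w (f ∘ p) - f u) := by
        gcongr
        exact hf.map_centerMass_le hw₀ hw₁ hp
    _ = ∑ i ∈ t, w i * (f (p i) - f u) := by
      rw [Finset.centerMass, smul_eq_mul, mul_sub, mul_inv_cancel_left₀ hw₁.ne']
      simp only [mul_sub, Finset.sum_sub_distrib, Finset.sum_mul, smul_eq_mul,
        Function.comp_apply]
    _ ≤ ∑ i ∈ t, w i * ⟪g i, p i - u⟫ := Finset.sum_le_sum fun i hi =>
      mul_le_mul_of_nonneg_left (hf.sub_le_inner_of_hasFDerivAt (hp i hi) hu (hdiff i hi))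
        (hw₀ i hi)

/-- Online-to-batch conversion with normalized gradients: if the normalized regret is at most
`B`, then the `1/‖g_t‖`-weighted average `x̄_T` satisfies `f(x̄_T) − f(u) ≤ B/(∑ 1/‖g_t‖)`. -/
theorem normalized_online_to_batch
    {H : Type*} [NormedAddCommGroup H] [InnerProductSpace ℝ H]
    (f : H → ℝ) (f' : H → H)
    (hconv : ConvexOn ℝ Set.univ f)
    (hdiff : ∀ x, HasFDerivAt f (innerSL ℝ (f' x)) x)
    (T : ℕ) (hT : 0 < T) (x : ℕ → H)
    (hgne : ∀ t ∈ Finset.Icc 1 T, f' (x t) ≠ 0)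
    (u : H) (B : ℝ)
    (hB : ∑ t ∈ Finset.Icc 1 T, ⟪‖f' (x t)‖⁻¹ • f' (x t), x t - u⟫ ≤ B) :
    f ((∑ t ∈ Finset.Icc 1 T, ‖f' (x t)‖⁻¹)⁻¹ •
        ∑ t ∈ Finset.Icc 1 T, ‖f' (x t)‖⁻¹ • x t) - f u
      ≤ B / ∑ t ∈ Finset.Icc 1 T, ‖f' (x t)‖⁻¹ := by
  have hw : 0 < ∑ t ∈ Finset.Icc 1 T, ‖f' (x t)‖⁻¹ :=
    Finset.sum_pos (fun t ht => inv_pos.2 (norm_pos_iff.2 (hgne t ht)))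
      ⟨1, Finset.mem_Icc.2 ⟨le_rfl, hT⟩⟩
  have hmean := hconv.sum_mul_map_centerMass_sub_le (t := Finset.Icc 1 T) (p := x)
    (fun t _ => inv_nonneg.2 (norm_nonneg _)) hw (fun t _ => Set.mem_univ _)
    (fun t _ => hdiff (x t)) (Set.mem_univ u)
  simp only [← real_inner_smul_left] at hmean
  rw [le_div_iff₀' hw]
  exact hmean.trans hB
end

section
/- Let H be a real inner product space, ν ∈ (0,1], L > 0, α > 0, T a positive integer. Let f : H → ℝ be convex, differentiable, (L,ν)-Hölder smooth (i.e. ‖∇f(x) − ∇f(y)‖ ≤ L·‖x − y‖^ν for all x, y), with global minimizer x⋆. Define normalized gradient descent iterates x_{t+1} = x_t − (α/√T)·(g_t/‖g_t‖) with g_t = ∇f(x_t), assuming g_t ≠ 0 for t = 1, …, T, and the weighted average x̄_T = (∑_{t=1}^T 1/‖g_t‖)^{-1}·∑_{t=1}^T x_t/‖g_t‖. Then f(x̄_T) − f(x⋆) ≤ L·(1 + 1/ν)^ν·( (1/(2√T))·(‖x₁ − x⋆‖²/α + α) )^{1+ν}. -/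
/-!
Convexity and the normalized step give the regret bound
`2η ∑ ‖g_t‖⁻¹ (f x_t - f x⋆) ≤ ‖x₁ - x⋆‖² + T η²`, whose left side dominates
`2η (∑ ‖g_t‖⁻¹) (f x̄ - f x⋆)` by Jensen. Hölder smoothness yields the descent lemma and hence
`‖g‖ ^ (1 + 1/ν) ≤ (1 + 1/ν) L ^ (1/ν) (f x - f x⋆)`, so `∑ ‖g_t‖ ^ (1/ν)` is controlled by the
same weighted gap sum. Hölder's inequality `T ^ (1 + ν) ≤ (∑ ‖g_t‖ ^ (1/ν)) ^ ν ∑ ‖g_t‖⁻¹` then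
bounds the total weight `∑ ‖g_t‖⁻¹` from below, which is what makes the rate adapt to `ν`.
-/

open scoped RealInnerProductSpace
open Finset

section HolderSmooth

variable {H : Type*} [NormedAddCommGroup H] [InnerProductSpace ℝ H] {f : H → ℝ} {f' : H → H}

theorem hasDerivAt_comp_add_smul (hdiff : ∀ x, HasFDerivAt f (innerSL ℝ (f' x)) x)
    (x v : H) (t : ℝ) : HasDerivAt (fun s : ℝ => f (x + s • v)) ⟪f' (x + t • v), v⟫ t := by
  have hline : HasDerivAt (fun s : ℝ => x + s • v) v t := by
    simpa using ((hasDerivAt_id t).smul_const v).const_add x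
  exact (hdiff _).comp_hasDerivAt t hline

theorem ConvexOn.inner_grad_le_sub (hconv : ConvexOn ℝ Set.univ f)
    (hdiff : ∀ x, HasFDerivAt f (innerSL ℝ (f' x)) x) (x y : H) :
    ⟪f' x, y - x⟫ ≤ f y - f x := by
  have hline : ConvexOn ℝ Set.univ (fun s : ℝ => f (x + s • (y - x))) := by
    simpa [Function.comp_def, AffineMap.lineMap_apply, add_comm] using
      hconv.comp_affineMap (AffineMap.lineMap x y)
  simpa [slope_def_field] using hline.le_slope_of_hasDerivAt (Set.mem_univ 0) (Set.mem_univ 1)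
    one_pos (hasDerivAt_comp_add_smul hdiff x (y - x) 0)

theorem sub_le_div_of_hasDerivAt_le_mul_rpow {φ φ' : ℝ → ℝ} {M ν : ℝ} (hν : -1 < ν)
    (hφ : ContinuousOn φ (Set.Icc 0 1)) (hφ' : ∀ t ∈ Set.Ioo 0 1, HasDerivAt φ (φ' t) t)
    (hle : ∀ t ∈ Set.Ioo 0 1, φ' t ≤ M * t ^ ν) : φ 1 - φ 0 ≤ M / (1 + ν) := by
  have hν' : 0 < 1 + ν := by linarith
  have hmono : MonotoneOn (fun t => M / (1 + ν) * t ^ (1 + ν) - φ t) (Set.Icc 0 1) := by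
    refine monotoneOn_of_hasDerivWithinAt_nonneg (f' := fun t => M * t ^ ν - φ' t)
      (convex_Icc 0 1) ?_ (fun t ht => ?_) (fun t ht => ?_)
    · exact (continuousOn_const.mul (Real.continuous_rpow_const hν'.le).continuousOn).sub hφ
    all_goals rw [interior_Icc] at ht
    · have hpow : HasDerivAt (fun t => M / (1 + ν) * t ^ (1 + ν)) (M * t ^ ν) t := by
        refine ((Real.hasDerivAt_rpow_const (Or.inl ht.1.ne')).const_mul _).congr_deriv ?_
        rw [add_sub_cancel_left]
        field_simp
      exact (hpow.sub (hφ' t ht)).hasDerivWithinAt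
    · linarith [hle t ht]
  have hends := hmono (Set.left_mem_Icc.2 zero_le_one) (Set.right_mem_Icc.2 zero_le_one)
    zero_le_one
  simp only [Real.zero_rpow hν'.ne', Real.one_rpow] at hends
  linarith

theorem apply_le_add_inner_add_rpow_of_holder {L ν : ℝ} (hν : -1 < ν)
    (hdiff : ∀ x, HasFDerivAt f (innerSL ℝ (f' x)) x)
    (hholder : ∀ x y, ‖f' x - f' y‖ ≤ L * ‖x - y‖ ^ ν) (x y : H) :
    f y ≤ f x + ⟪f' x, y - x⟫ + L / (1 + ν) * ‖y - x‖ ^ (1 + ν) := by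
  set v := y - x
  have hbound : ∀ t ∈ Set.Ioo (0 : ℝ) 1,
      ⟪f' (x + t • v), v⟫ - ⟪f' x, v⟫ ≤ L * ‖v‖ ^ (1 + ν) * t ^ ν := fun t ht => by
    calc ⟪f' (x + t • v), v⟫ - ⟪f' x, v⟫ = ⟪f' (x + t • v) - f' x, v⟫ := (inner_sub_left ..).symm
      _ ≤ ‖f' (x + t • v) - f' x‖ * ‖v‖ := real_inner_le_norm _ _
      _ ≤ L * ‖t • v‖ ^ ν * ‖v‖ := by
        gcongr
        simpa using hholder (x + t • v) x
      _ = L * ‖v‖ ^ (1 + ν) * t ^ ν := by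
        rw [norm_smul, Real.norm_of_nonneg ht.1.le, Real.mul_rpow ht.1.le (norm_nonneg v),
          Real.rpow_one_add' (norm_nonneg v) (by linarith)]
        ring
  have key := sub_le_div_of_hasDerivAt_le_mul_rpow hν
    (φ := fun t => f (x + t • v) - t * ⟪f' x, v⟫)
    (fun t _ => ((hasDerivAt_comp_add_smul hdiff x v t).sub
      ((hasDerivAt_id t).mul_const _)).continuousAt.continuousWithinAt)
    (fun t _ => ((hasDerivAt_comp_add_smul hdiff x v t).sub ((hasDerivAt_id t).mul_const _)))
    (by simpa using hbound)
  simp only [one_smul, zero_smul, add_zero, one_mul, zero_mul, sub_zero] at key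
  rw [show x + v = y by simp [v]] at key
  rw [show L / (1 + ν) * ‖v‖ ^ (1 + ν) = L * ‖v‖ ^ (1 + ν) / (1 + ν) by ring]
  linarith

theorem norm_grad_rpow_le_of_holder {L ν : ℝ} (hν : 0 < ν) (hL : 0 < L)
    (hdiff : ∀ x, HasFDerivAt f (innerSL ℝ (f' x)) x)
    (hholder : ∀ x y, ‖f' x - f' y‖ ≤ L * ‖x - y‖ ^ ν) {xstar : H} (hmin : ∀ x, f xstar ≤ f x)
    (z : H) : ‖f' z‖ ^ (1 + 1 / ν) ≤ (1 + 1 / ν) * L ^ (1 / ν) * (f z - f xstar) := by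
  have hgap : 0 ≤ f z - f xstar := sub_nonneg.2 (hmin z)
  rcases eq_or_ne (f' z) 0 with hzero | hne
  · rw [hzero, norm_zero, Real.zero_rpow (by positivity)]
    positivity
  set g := ‖f' z‖
  have hg : 0 < g := norm_pos_iff.2 hne
  -- the step length `s` minimises the model `-s g + L s ^ (1 + ν) / (1 + ν)`
  set s := (g / L) ^ (1 / ν)
  have hs : 0 < s := by positivity
  have hsν : s ^ ν = g / L := by
    rw [← Real.rpow_mul (by positivity), one_div_mul_cancel hν.ne', Real.rpow_one]
  have hgν : g ^ (1 / ν) = s * L ^ (1 / ν) := by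
    rw [show s = (g / L) ^ (1 / ν) from rfl, Real.div_rpow hg.le hL.le,
      div_mul_cancel₀ _ (by positivity)]
  have hdesc := apply_le_add_inner_add_rpow_of_holder (by linarith) hdiff hholder z
    (z - (s / g) • f' z)
  rw [sub_sub_cancel_left, inner_neg_right, real_inner_smul_right, real_inner_self_eq_norm_sq,
    norm_neg, norm_smul, Real.norm_of_nonneg (by positivity), div_mul_cancel₀ _ hg.ne',
    Real.rpow_one_add' hs.le (by positivity), hsν] at hdesc
  change _ ≤ f z + -(s / g * g ^ 2) + L / (1 + ν) * (s * (g / L)) at hdesc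
  have hmodel : ν / (1 + ν) * (s * g) ≤ f z - f xstar := by
    have hval : f z + -(s / g * g ^ 2) + L / (1 + ν) * (s * (g / L))
        = f z - ν / (1 + ν) * (s * g) := by
      field_simp
      ring
    linarith [hmin (z - (s / g) • f' z)]
  rw [Real.rpow_one_add' hg.le (by positivity), hgν]
  calc g * (s * L ^ (1 / ν)) = (1 + 1 / ν) * L ^ (1 / ν) * (ν / (1 + ν) * (s * g)) := by
        field_simp
        ring
    _ ≤ _ := by gcongr

end HolderSmooth

section NormalizedGD

variable {H : Type*} [NormedAddCommGroup H] [InnerProductSpace ℝ H] {f : H → ℝ} {f' : H → H}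

theorem sq_dist_normalized_step_le (hconv : ConvexOn ℝ Set.univ f)
    (hdiff : ∀ x, HasFDerivAt f (innerSL ℝ (f' x)) x) {η : ℝ} (hη : 0 ≤ η) (y z : H) :
    ‖y - η • (‖f' y‖⁻¹ • f' y) - z‖ ^ 2
      ≤ ‖y - z‖ ^ 2 - 2 * η * (‖f' y‖⁻¹ * (f y - f z)) + η ^ 2 := by
  set u := ‖f' y‖⁻¹ • f' y
  have hu : ‖u‖ ≤ 1 := by
    rw [norm_smul, norm_inv, norm_norm]
    exact inv_mul_le_one_of_le₀ le_rfl (norm_nonneg _)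
  have hgap : ‖f' y‖⁻¹ * (f y - f z) ≤ ⟪y - z, u⟫ := by
    have hconvex := hconv.inner_grad_le_sub hdiff y z
    rw [← neg_sub y z, inner_neg_right] at hconvex
    rw [real_inner_smul_right, real_inner_comm]
    gcongr
    linarith
  have hexpand : ‖y - η • u - z‖ ^ 2 = ‖y - z‖ ^ 2 - 2 * η * ⟪y - z, u⟫ + η ^ 2 * ‖u‖ ^ 2 := by
    rw [sub_right_comm, norm_sub_sq_real, real_inner_smul_right, norm_smul,
      Real.norm_of_nonneg hη]
    ring
  rw [hexpand]
  have : η ^ 2 * ‖u‖ ^ 2 ≤ η ^ 2 :=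
    mul_le_of_le_one_right (sq_nonneg η) (pow_le_one₀ (norm_nonneg u) hu)
  nlinarith

theorem two_mul_sum_inv_norm_grad_mul_sub_le (hconv : ConvexOn ℝ Set.univ f)
    (hdiff : ∀ x, HasFDerivAt f (innerSL ℝ (f' x)) x) {η : ℝ} (hη : 0 ≤ η) (z : H)
    (x : ℕ → H) (T : ℕ)
    (hrec : ∀ t ∈ Icc 1 T, x (t + 1) = x t - η • (‖f' (x t)‖⁻¹ • f' (x t))) :
    2 * η * ∑ t ∈ Icc 1 T, ‖f' (x t)‖⁻¹ * (f (x t) - f z) ≤ ‖x 1 - z‖ ^ 2 + T * η ^ 2 := by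
  have hstep : ∀ t ∈ Icc 1 T, 2 * η * (‖f' (x t)‖⁻¹ * (f (x t) - f z))
      ≤ η ^ 2 - (‖x (t + 1) - z‖ ^ 2 - ‖x t - z‖ ^ 2) := fun t ht => by
    have := sq_dist_normalized_step_le hconv hdiff hη (x t) z
    rw [hrec t ht]
    linarith
  calc 2 * η * ∑ t ∈ Icc 1 T, ‖f' (x t)‖⁻¹ * (f (x t) - f z)
      ≤ ∑ t ∈ Icc 1 T, (η ^ 2 - (‖x (t + 1) - z‖ ^ 2 - ‖x t - z‖ ^ 2)) := by
        rw [mul_sum]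
        exact sum_le_sum hstep
    _ = T * η ^ 2 - (‖x (T + 1) - z‖ ^ 2 - ‖x 1 - z‖ ^ 2) := by
        rw [sum_sub_distrib, sum_const, Nat.card_Icc, nsmul_eq_mul, ← Ico_add_one_right_eq_Icc,
          sum_Ico_sub (fun t => ‖x t - z‖ ^ 2) (by omega)]
        simp
    _ ≤ ‖x 1 - z‖ ^ 2 + T * η ^ 2 := by nlinarith [sq_nonneg ‖x (T + 1) - z‖]

end NormalizedGD

theorem ConvexOn.sum_mul_map_centerMass_sub_le_s10 {E ι : Type*} [AddCommGroup E] [Module ℝ E]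
    {D : Set E} {f : E → ℝ} (hf : ConvexOn ℝ D f) {s : Finset ι} {w : ι → ℝ} {p : ι → E}
    (hw : ∀ i ∈ s, 0 ≤ w i) (hW : 0 < ∑ i ∈ s, w i) (hp : ∀ i ∈ s, p i ∈ D) (c : ℝ) :
    (∑ i ∈ s, w i) * (f (s.centerMass w p) - c) ≤ ∑ i ∈ s, w i * (f (p i) - c) := by
  have hjensen := hf.map_centerMass_le hw hW hp
  simp only [centerMass, Function.comp_apply, smul_eq_mul] at hjensen ⊢
  rw [le_inv_mul_iff₀ hW] at hjensen
  simp only [mul_sub, sum_sub_distrib, ← sum_mul]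
  linarith

theorem card_rpow_le_sum_rpow_mul_sum_inv {ι : Type*} (s : Finset ι) {a : ι → ℝ}
    (ha : ∀ i ∈ s, 0 < a i) {ν : ℝ} (hν : 0 < ν) :
    (#s : ℝ) ^ (1 + ν) ≤ (∑ i ∈ s, a i ^ (1 / ν)) ^ ν * ∑ i ∈ s, (a i)⁻¹ := by
  have hpq : ((1 + ν) / ν).HolderConjugate (1 + ν) := by
    rw [Real.holderConjugate_iff, lt_div_iff₀ hν]
    constructor
    · linarith
    · field_simp
      ring
  -- Hölder applied to `1 = a ^ (1 / (1 + ν)) * a⁻¹ ^ (1 / (1 + ν))`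
  have hholder := Real.inner_le_Lp_mul_Lq_of_nonneg s hpq
    (f := fun i => a i ^ (1 / (1 + ν))) (g := fun i => (a i)⁻¹ ^ (1 / (1 + ν)))
    (fun i hi => (Real.rpow_pos_of_pos (ha i hi) _).le)
    (fun i hi => (Real.rpow_pos_of_pos (inv_pos.2 (ha i hi)) _).le)
  have hone : ∀ i ∈ s, a i ^ (1 / (1 + ν)) * (a i)⁻¹ ^ (1 / (1 + ν)) = 1 := fun i hi => by
    rw [← Real.mul_rpow (ha i hi).le (inv_pos.2 (ha i hi)).le, mul_inv_cancel₀ (ha i hi).ne',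
      Real.one_rpow]
  have hG : ∀ i ∈ s, (a i ^ (1 / (1 + ν))) ^ ((1 + ν) / ν) = a i ^ (1 / ν) := fun i hi => by
    rw [← Real.rpow_mul (ha i hi).le]
    congr 1
    field_simp
  have hW : ∀ i ∈ s, ((a i)⁻¹ ^ (1 / (1 + ν))) ^ (1 + ν) = (a i)⁻¹ := fun i hi => by
    rw [← Real.rpow_mul (inv_pos.2 (ha i hi)).le, one_div_mul_cancel (by linarith),
      Real.rpow_one]
  rw [sum_congr rfl hone, sum_congr rfl hG, sum_congr rfl hW, sum_const, nsmul_one,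
    one_div_div] at hholder
  have hGnn : 0 ≤ ∑ i ∈ s, a i ^ (1 / ν) :=
    sum_nonneg fun i hi => (Real.rpow_pos_of_pos (ha i hi) _).le
  have hWnn : 0 ≤ ∑ i ∈ s, (a i)⁻¹ := sum_nonneg fun i hi => (inv_pos.2 (ha i hi)).le
  calc (#s : ℝ) ^ (1 + ν)
      ≤ ((∑ i ∈ s, a i ^ (1 / ν)) ^ (ν / (1 + ν)) * (∑ i ∈ s, (a i)⁻¹) ^ (1 / (1 + ν)))
        ^ (1 + ν) := by gcongr
    _ = (∑ i ∈ s, a i ^ (1 / ν)) ^ ν * ∑ i ∈ s, (a i)⁻¹ := by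
      rw [Real.mul_rpow (by positivity) (by positivity), ← Real.rpow_mul hGnn,
        ← Real.rpow_mul hWnn, div_mul_cancel₀ _ (by linarith), one_div_mul_cancel (by linarith),
        Real.rpow_one]

theorem le_rpow_mul_div_card_rpow_of_inv_weighted_le {ι : Type*} {s : Finset ι} {a ε : ι → ℝ}
    {δ K B ν : ℝ} (hs : s.Nonempty) (hν : 0 < ν) (ha : ∀ i ∈ s, 0 < a i) (hK : 0 ≤ K)
    (hδ : 0 ≤ δ) (hgap : ∀ i ∈ s, a i ^ (1 + 1 / ν) ≤ K * ε i)
    (hmean : (∑ i ∈ s, (a i)⁻¹) * δ ≤ ∑ i ∈ s, (a i)⁻¹ * ε i)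
    (hB : ∑ i ∈ s, (a i)⁻¹ * ε i ≤ B) :
    δ ≤ K ^ ν * (B / #s) ^ (1 + ν) := by
  have hW : 0 < ∑ i ∈ s, (a i)⁻¹ := sum_pos (fun i hi => inv_pos.2 (ha i hi)) hs
  have hB0 : 0 ≤ B := by nlinarith
  have hG : ∑ i ∈ s, a i ^ (1 / ν) ≤ K * B := by
    have hterm : ∀ i ∈ s, a i ^ (1 / ν) ≤ K * ((a i)⁻¹ * ε i) := fun i hi => by
      have := hgap i hi
      rw [Real.rpow_one_add' (ha i hi).le (by positivity)] at this
      rw [mul_left_comm, le_inv_mul_iff₀ (ha i hi)]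
      exact this
    calc ∑ i ∈ s, a i ^ (1 / ν) ≤ ∑ i ∈ s, K * ((a i)⁻¹ * ε i) := sum_le_sum hterm
      _ ≤ K * B := by rw [← mul_sum]; gcongr
  have hcard : (0 : ℝ) < (#s : ℝ) ^ (1 + ν) := by
    have : (0 : ℝ) < #s := by exact_mod_cast hs.card_pos
    positivity
  have hrhs : K ^ ν * (B / #s) ^ (1 + ν) = (K * B) ^ ν * B / (#s : ℝ) ^ (1 + ν) := by
    rw [Real.div_rpow hB0 (by positivity), Real.rpow_one_add' hB0 (by positivity),
      Real.mul_rpow hK hB0]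
    ring
  rw [hrhs, le_div_iff₀ hcard]
  calc δ * (#s : ℝ) ^ (1 + ν)
      ≤ δ * ((∑ i ∈ s, a i ^ (1 / ν)) ^ ν * ∑ i ∈ s, (a i)⁻¹) := by
        gcongr
        exact card_rpow_le_sum_rpow_mul_sum_inv s ha hν
    _ ≤ δ * ((K * B) ^ ν * ∑ i ∈ s, (a i)⁻¹) := by
        gcongr
        exact sum_nonneg fun i hi => (Real.rpow_pos_of_pos (ha i hi) _).le
    _ = (K * B) ^ ν * ((∑ i ∈ s, (a i)⁻¹) * δ) := by ring
    _ ≤ (K * B) ^ ν * B := by gcongr; exact hmean.trans hB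

theorem normalized_gd_holder_rate_general
    {H : Type*} [NormedAddCommGroup H] [InnerProductSpace ℝ H]
    (ν L α : ℝ) (hν0 : 0 < ν) (hL : 0 < L) (hα : 0 < α)
    (T : ℕ) (hT : 0 < T)
    (f : H → ℝ) (f' : H → H)
    (hconv : ConvexOn ℝ Set.univ f)
    (hdiff : ∀ x, HasFDerivAt f (innerSL ℝ (f' x)) x)
    (hholder : ∀ x y, ‖f' x - f' y‖ ≤ L * ‖x - y‖ ^ ν)
    (xstar : H) (hmin : ∀ x, f xstar ≤ f x)
    (x₁ : H) (x : ℕ → H) (hx1 : x 1 = x₁)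
    (hgne : ∀ t ∈ Finset.Icc 1 T, f' (x t) ≠ 0)
    (hrec : ∀ t ∈ Finset.Icc 1 T,
      x (t + 1) = x t - (α / Real.sqrt T) • (‖f' (x t)‖⁻¹ • f' (x t))) :
    f ((∑ t ∈ Finset.Icc 1 T, ‖f' (x t)‖⁻¹)⁻¹ •
        ∑ t ∈ Finset.Icc 1 T, ‖f' (x t)‖⁻¹ • x t) - f xstar
      ≤ L * (1 + 1 / ν) ^ ν *
        (1 / (2 * Real.sqrt T) * (‖x₁ - xstar‖ ^ 2 / α + α)) ^ (1 + ν) := by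
  have hTpos : (0 : ℝ) < T := by exact_mod_cast hT
  have hη : 0 < α / Real.sqrt T := div_pos hα (Real.sqrt_pos.2 hTpos)
  have hnorm : ∀ t ∈ Icc 1 T, 0 < ‖f' (x t)‖ := fun t ht => norm_pos_iff.2 (hgne t ht)
  have hdesc := two_mul_sum_inv_norm_grad_mul_sub_le hconv hdiff hη.le xstar x T hrec
  have hmean := hconv.sum_mul_map_centerMass_sub_le_s10 (fun t ht => (inv_pos.2 (hnorm t ht)).le)
    (sum_pos (fun t ht => inv_pos.2 (hnorm t ht)) (nonempty_Icc.2 hT))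
    (p := x) (fun _ _ => Set.mem_univ _) (f xstar)
  have hrate := le_rpow_mul_div_card_rpow_of_inv_weighted_le (nonempty_Icc.2 hT) hν0 hnorm
    (by positivity) (sub_nonneg.2 (hmin _))
    (fun t _ => norm_grad_rpow_le_of_holder hν0 hL hdiff hholder hmin (x t)) hmean
    ((le_div_iff₀' (by positivity)).2 hdesc)
  have hconst : ((1 + 1 / ν) * L ^ (1 / ν)) ^ ν = L * (1 + 1 / ν) ^ ν := by
    rw [Real.mul_rpow (by positivity) (by positivity), ← Real.rpow_mul hL.le,
      one_div_mul_cancel hν0.ne', Real.rpow_one, mul_comm]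
  have hbase : (‖x 1 - xstar‖ ^ 2 + T * (α / Real.sqrt T) ^ 2) / (2 * (α / Real.sqrt T))
      / #(Icc 1 T) = 1 / (2 * Real.sqrt T) * (‖x₁ - xstar‖ ^ 2 / α + α) := by
    rw [Nat.card_Icc, Nat.add_sub_cancel, hx1, div_pow, Real.sq_sqrt hTpos.le]
    field_simp
    rw [Real.sq_sqrt hTpos.le]
  rwa [hconst, hbase] at hrate

/-- Normalized gradient descent adapts to Hölder smoothness:
`f(x̄_T) − f(x⋆) ≤ L(1 + 1/ν)^ν ((1/(2√T))(‖x₁ − x⋆‖²/α + α))^{1+ν}`. -/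
theorem normalized_gd_holder_rate
    {H : Type*} [NormedAddCommGroup H] [InnerProductSpace ℝ H]
    (ν L α : ℝ) (hν0 : 0 < ν) (hν1 : ν ≤ 1) (hL : 0 < L) (hα : 0 < α)
    (T : ℕ) (hT : 0 < T)
    (f : H → ℝ) (f' : H → H)
    (hconv : ConvexOn ℝ Set.univ f)
    (hdiff : ∀ x, HasFDerivAt f (innerSL ℝ (f' x)) x)
    (hholder : ∀ x y, ‖f' x - f' y‖ ≤ L * ‖x - y‖ ^ ν)
    (xstar : H) (hmin : ∀ x, f xstar ≤ f x)
    (x₁ : H) (x : ℕ → H) (hx1 : x 1 = x₁)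
    (hgne : ∀ t ∈ Finset.Icc 1 T, f' (x t) ≠ 0)
    (hrec : ∀ t ∈ Finset.Icc 1 T,
      x (t + 1) = x t - (α / Real.sqrt T) • (‖f' (x t)‖⁻¹ • f' (x t))) :
    f ((∑ t ∈ Finset.Icc 1 T, ‖f' (x t)‖⁻¹)⁻¹ •
        ∑ t ∈ Finset.Icc 1 T, ‖f' (x t)‖⁻¹ • x t) - f xstar
      ≤ L * (1 + 1 / ν) ^ ν *
        (1 / (2 * Real.sqrt T) * (‖x₁ - xstar‖ ^ 2 / α + α)) ^ (1 + ν) :=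
  normalized_gd_holder_rate_general ν L α hν0 hL hα T hT f f' hconv hdiff hholder xstar hmin x₁ x
    hx1 hgne hrec
end

section
/- Let H be a real inner product space, T a positive integer, α > 0, x₁ ∈ H, and let q_1, …, q_T ∈ H with ‖q_t‖ = 1 for all t. Define the dual averaging iterates x_{t+1} = x₁ − (α/√t)·∑_{i=1}^{t} q_i for t = 1, …, T. Then for every u ∈ H, ∑_{t=1}^T ⟨q_t, x_t − u⟩ ≤ √T·(‖u − x₁‖²/(2α) + α). -/
open scoped RealInnerProductSpace

open Finset

/-!
Write `S t` for the sum of the first `t` losses and `w t` for the step size of round `t`. Since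
`S (t + 1) = S t + g t`, the linearised loss `-⟪g t, w t • S t⟫` equals
`w t / 2 * (‖S t‖² - ‖S (t + 1)‖² + ‖g t‖²)`. For nonincreasing `w` the weighted telescoping sum
is at most `-w T / 2 * ‖S T‖²`, and Young's inequality absorbs `⟪S T, x₁ - u⟫` into it at the price
`‖u - x₁‖² / (2 w T)`. What remains is `∑ w t / 2` with `w t = α / √(max t 1)`; it is at most
`α √T` because `2√n - 1/√n` increases by at least `1/√n` from `n` to `n + 1`.
-/

lemma sum_Icc_one_eq_sum_range {M : Type*} [AddCommMonoid M] (f : ℕ → M) (n : ℕ) :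
    ∑ i ∈ Icc 1 n, f i = ∑ i ∈ range n, f (i + 1) := by
  rw [range_eq_Ico, sum_Ico_add' f 0 n 1]
  rfl

lemma sum_range_mul_sub_succ_le_of_antitone {w a : ℕ → ℝ} (hw : Antitone w) (ha : ∀ t, 0 ≤ a t)
    (T : ℕ) : ∑ t ∈ range T, w t * (a t - a (t + 1)) ≤ w 0 * a 0 - w T * a T := by
  induction T with
  | zero => simp
  | succ T ih =>
    rw [sum_range_succ]
    linarith [mul_le_mul_of_nonneg_right (hw T.le_succ) (ha (T + 1))]

lemma inv_sqrt_add_one_le_two_mul_sqrt_add_one_sub_sqrt {x : ℝ} (hx : 0 ≤ x) :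
    (√(x + 1))⁻¹ ≤ 2 * (√(x + 1) - √x) := by
  have hpos : 0 < √(x + 1) := Real.sqrt_pos.2 (by linarith)
  have hmono : √x ≤ √(x + 1) := Real.sqrt_le_sqrt (by linarith)
  rw [inv_le_iff_one_le_mul₀' hpos]
  nlinarith [Real.sq_sqrt hx, Real.sq_sqrt (by linarith : 0 ≤ x + 1), sq_nonneg (√(x + 1) - √x)]

lemma sum_range_inv_sqrt_max_one_add_inv_sqrt_le (T : ℕ) (hT : 1 ≤ T) :
    ∑ t ∈ range T, (√(max (t : ℝ) 1))⁻¹ + (√(T : ℝ))⁻¹ ≤ 2 * √(T : ℝ) := by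
  induction T, hT using Nat.le_induction with
  | base => norm_num
  | succ T hT ih =>
    have hmax : max (T : ℝ) 1 = T := max_eq_left (by exact_mod_cast hT)
    rw [sum_range_succ, hmax]
    push_cast
    linarith [inv_sqrt_add_one_le_two_mul_sqrt_add_one_sub_sqrt (T.cast_nonneg : (0 : ℝ) ≤ T)]

section DualAveraging

variable {H : Type*} [NormedAddCommGroup H] [InnerProductSpace ℝ H]

lemma inner_sub_half_mul_norm_sq_le {η : ℝ} (hη : 0 < η) (s v : H) :
    ⟪s, v⟫ - η / 2 * ‖s‖ ^ 2 ≤ ‖v‖ ^ 2 / (2 * η) := by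
  have h := sq_nonneg ‖v - η • s‖
  rw [norm_sub_sq_real, norm_smul, inner_smul_right, real_inner_comm,
    Real.norm_of_nonneg hη.le] at h
  rw [le_div_iff₀ (by positivity)]
  linarith

theorem dual_averaging_regret_le (g : ℕ → H) {w : ℕ → ℝ} (hw : Antitone w) {T : ℕ}
    (hwT : 0 < w T) (x₀ u : H) :
    ∑ t ∈ range T, ⟪g t, x₀ - w t • ∑ i ∈ range t, g i - u⟫
      ≤ ‖u - x₀‖ ^ 2 / (2 * w T) + ∑ t ∈ range T, w t / 2 * ‖g t‖ ^ 2 := by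
  set S : ℕ → H := fun t => ∑ i ∈ range t, g i
  have hS0 : S 0 = 0 := sum_range_zero g
  have hS_succ (t : ℕ) : S (t + 1) = S t + g t := sum_range_succ g t
  have step (t : ℕ) : ⟪g t, x₀ - w t • S t - u⟫
      = ⟪g t, x₀ - u⟫ + w t * (‖S t‖ ^ 2 - ‖S (t + 1)‖ ^ 2) / 2 + w t / 2 * ‖g t‖ ^ 2 := by
    rw [hS_succ, norm_add_sq_real, sub_right_comm, inner_sub_right, inner_smul_right,
      real_inner_comm (g t) (S t)]
    ring
  have telescope := sum_range_mul_sub_succ_le_of_antitone hw (fun t => sq_nonneg ‖S t‖) T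
  have young := inner_sub_half_mul_norm_sq_le hwT (S T) (x₀ - u)
  rw [hS0, norm_zero] at telescope
  rw [sum_congr rfl fun t _ => step t, sum_add_distrib, sum_add_distrib, ← sum_inner, ← sum_div,
    norm_sub_rev]
  linarith

end DualAveraging

/-- Regret bound for FTRL/Dual Averaging with unit-norm linear losses and stepsize `α/√t`:
`∑_{t=1}^T ⟨q_t, x_t − u⟩ ≤ √T·(‖u − x₁‖²/(2α) + α)`. -/
theorem dual_averaging_unit_losses_regret
    {H : Type*} [NormedAddCommGroup H] [InnerProductSpace ℝ H]
    (T : ℕ) (hT : 0 < T) (α : ℝ) (hα : 0 < α) (x₁ : H)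
    (q x : ℕ → H)
    (hq : ∀ t ∈ Finset.Icc 1 T, ‖q t‖ = 1)
    (hx1 : x 1 = x₁)
    (hrec : ∀ t ∈ Finset.Icc 1 T,
      x (t + 1) = x₁ - (α / Real.sqrt t) • ∑ i ∈ Finset.Icc 1 t, q i) :
    ∀ u : H, ∑ t ∈ Finset.Icc 1 T, ⟪q t, x t - u⟫
      ≤ Real.sqrt T * (‖u - x₁‖ ^ 2 / (2 * α) + α) := by
  intro u
  -- `S 0 = 0`, so the first step size is arbitrary; `α` makes `w` antitone.
  set w : ℕ → ℝ := fun t => α / √(max (t : ℝ) 1)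
  have hw : Antitone w := fun s t hst =>
    div_le_div_of_nonneg_left hα.le (by positivity)
      (Real.sqrt_le_sqrt (max_le_max_right 1 (by exact_mod_cast hst)))
  have hw_of_pos {t : ℕ} (ht : 1 ≤ t) : w t = α / √t := by
    simp only [w, max_eq_left (by exact_mod_cast ht : (1 : ℝ) ≤ t)]
  have hiter (t : ℕ) (ht : t < T) : x (t + 1) = x₁ - w t • ∑ i ∈ range t, q (i + 1) := by
    rcases Nat.eq_zero_or_pos t with rfl | htpos
    · simp [hx1]
    · rw [hrec t (mem_Icc.2 ⟨htpos, ht.le⟩), hw_of_pos htpos, sum_Icc_one_eq_sum_range]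
  have hterm (t : ℕ) (ht : t ∈ range T) :
      w t / 2 * ‖q (t + 1)‖ ^ 2 = α / 2 * (√(max (t : ℝ) 1))⁻¹ := by
    rw [hq (t + 1) (mem_Icc.2 ⟨Nat.le_add_left 1 t, mem_range.1 ht⟩)]
    simp only [w]; ring
  calc ∑ t ∈ Icc 1 T, ⟪q t, x t - u⟫
      = ∑ t ∈ range T, ⟪q (t + 1), x₁ - w t • ∑ i ∈ range t, q (i + 1) - u⟫ := by
        rw [sum_Icc_one_eq_sum_range]
        exact sum_congr rfl fun t ht => by rw [hiter t (mem_range.1 ht)]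
    _ ≤ ‖u - x₁‖ ^ 2 / (2 * w T) + ∑ t ∈ range T, w t / 2 * ‖q (t + 1)‖ ^ 2 :=
        dual_averaging_regret_le _ hw (by rw [hw_of_pos hT]; positivity) x₁ u
    _ = √T * (‖u - x₁‖ ^ 2 / (2 * α)) + α / 2 * ∑ t ∈ range T, (√(max (t : ℝ) 1))⁻¹ := by
        rw [sum_congr rfl hterm, ← mul_sum, hw_of_pos hT, mul_div_assoc', div_div_eq_mul_div]
        ring
    _ ≤ √T * (‖u - x₁‖ ^ 2 / (2 * α) + α) := by
        have hsum : ∑ t ∈ range T, (√(max (t : ℝ) 1))⁻¹ ≤ 2 * √(T : ℝ) := by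
          linarith [sum_range_inv_sqrt_max_one_add_inv_sqrt_le T hT,
            inv_nonneg.2 (Real.sqrt_nonneg (T : ℝ))]
        linarith [mul_le_mul_of_nonneg_left hsum (by positivity : 0 ≤ α / 2)]
end
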